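/- arXiv:1910.07036 — 2 statements merged into one kernel-verified Lean document; each statement's English description precedes it below -/
import Mathlib

section
/- The simple objects in the category of ℋ-modules are exactly the modules that equal the one-dimensional simple H_{|α|}(0)-module C_α in degree |α| and are zero in all other degrees. -/
/-- The data of a sequence of `H_m(0)`-modules with transition maps: a `k`-vector
space `V m` for each `m`, operators `T m i` (the action of the 0-Hecke generator
`π_i ∈ H_m(0)`, meaningful for `1 ≤ i ≤ m - 1`), and `H_m(0)`-equivariant transition
maps `φ m : V m → V (m+1)`. -/
structure HSeq (k : Type) [Field k] where
  V : ℕ → Type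
  [acg : ∀ m, AddCommGroup (V m)]
  [mod : ∀ m, Module k (V m)]
  T : ∀ m, ℕ → V m →ₗ[k] V m
  φ : ∀ m, V m →ₗ[k] V (m + 1)

attribute [instance] HSeq.acg HSeq.mod

variable {k : Type} [Field k]

/-- The composite transition map `V n → V m` for `n ≤ m`. -/
def HSeq.transit (X : HSeq k) {n m : ℕ} (h : n ≤ m) (v : X.V n) : X.V m :=
  Nat.leRecOn h (fun {j} w => X.φ j w) v

/-- `X` is a `ℋ`-module: the `T m i` satisfy the 0-Hecke relations, the transition
maps are equivariant, and (the `ℋ`-module criterion) every element in the image of a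
composite transition map `V n → V m` is fixed by `π_j` for `n + 1 ≤ j ≤ m - 1`. -/
def HSeq.IsHModule (X : HSeq k) : Prop :=
  (∀ m i, 1 ≤ i → i + 1 ≤ m → (X.T m i).comp (X.T m i) = X.T m i) ∧
  (∀ m i, 1 ≤ i → i + 2 ≤ m →
    (X.T m i).comp ((X.T m (i + 1)).comp (X.T m i)) =
      (X.T m (i + 1)).comp ((X.T m i).comp (X.T m (i + 1)))) ∧
  (∀ m i j, 1 ≤ i → i + 1 < j → j + 1 ≤ m →
    (X.T m i).comp (X.T m j) = (X.T m j).comp (X.T m i)) ∧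
  (∀ m i, 1 ≤ i → i + 1 ≤ m → (X.T (m + 1) i).comp (X.φ m) = (X.φ m).comp (X.T m i)) ∧
  (∀ n m (h : n ≤ m) j, n + 1 ≤ j → j + 1 ≤ m →
    ∀ v : X.V n, X.T m j (X.transit h v) = X.transit h v)

/-- A `ℋ`-submodule of `X`: a family of subspaces closed under the 0-Hecke operators
and the transition maps. -/
def HSeq.IsSub (X : HSeq k) (W : ∀ m, Submodule k (X.V m)) : Prop :=
  (∀ m i, 1 ≤ i → i + 1 ≤ m → ∀ v ∈ W m, X.T m i v ∈ W m) ∧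
  (∀ m, ∀ v ∈ W m, X.φ m v ∈ W (m + 1))

/-- The descent set `D(α)` of a composition `α`. -/
def compDescents {n : ℕ} (α : Composition n) : Finset ℕ :=
  (Finset.range (α.length - 1)).image fun i => (α.blocks.take (i + 1)).sum

/-!
A simple `ℋ`-module lives in a single degree `n`, because for every `p` the parts in
degrees `≥ p` form a submodule; there it is a simple `H_n(0)`-module. Such a module is a
line: given a common eigenvector of `π_1, …, π_{m-1}`, apply `π_m, π_{m-1}, …` in turn.
The braid relation keeps the vector an eigenvector of every generator except the next one
to be applied, so the process ends, either at a vector killed by that generator or after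
`π_1`, with a common eigenvector of `π_1, …, π_m`, whose span is then a submodule. On a
line each idempotent `π_i` acts by `0` or `1`, and the set of `i` with `π_i = 0` is the
descent set of some composition `α`, so the line is `C_α`.
-/

theorem mem_compDescents_iff {n : ℕ} (α : Composition n) (i : ℕ) :
    i ∈ compDescents α ↔ 0 < i ∧ i < n ∧ ∃ x ∈ α.boundaries, (x : ℕ) = i := by
  have hbd (j : Fin (α.length + 1)) : (α.boundary j : ℕ) = α.sizeUpTo j := rfl
  simp only [compDescents, Finset.mem_image, Finset.mem_range, Composition.boundaries,
    Finset.mem_map, Finset.mem_univ, true_and, RelEmbedding.coe_toEmbedding]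
  constructor
  · rintro ⟨j, hj, rfl⟩
    refine ⟨?_, ?_, _, ⟨⟨j + 1, by omega⟩, rfl⟩, rfl⟩
    · exact (α.sizeUpTo_strict_mono (i := 0) (by omega)).trans_le
        (α.monotone_sizeUpTo (by omega))
    · exact (α.sizeUpTo_strict_mono (i := j + 1) (by omega)).trans_le (α.sizeUpTo_le _)
  · rintro ⟨hpos, hlt, _, ⟨j, rfl⟩, rfl⟩
    rw [hbd] at hpos hlt ⊢
    have hj0 : (j : ℕ) ≠ 0 := fun h => by simp [h] at hpos
    have hjlen : (j : ℕ) < α.length := by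
      by_contra! h
      simp [α.sizeUpTo_ofLength_le _ h] at hlt
    exact ⟨j - 1, by omega, by rw [Nat.sub_add_cancel (Nat.pos_of_ne_zero hj0)]; rfl⟩

theorem exists_composition_compDescents_eq {n : ℕ} (S : Finset ℕ)
    (hS : ∀ i ∈ S, 0 < i ∧ i < n) :
    ∃ α : Composition n, compDescents α = S := by
  let c : CompositionAsSet n :=
    ⟨{x | x = 0 ∨ x = Fin.last n ∨ (x : ℕ) ∈ S}, by simp, by simp⟩
  refine ⟨c.toComposition, Finset.ext fun i => ?_⟩
  rw [mem_compDescents_iff, CompositionAsSet.toComposition_boundaries]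
  constructor
  · rintro ⟨hpos, hlt, x, hx, rfl⟩
    simp only [c, Finset.mem_filter, Finset.mem_univ, true_and] at hx
    rcases hx with rfl | rfl | hx
    · simp at hpos
    · simp at hlt
    · exact hx
  · intro hi
    obtain ⟨hpos, hlt⟩ := hS i hi
    exact ⟨hpos, hlt, ⟨i, by omega⟩, by simp [c, hi], rfl⟩

section ZeroHecke

variable {R M : Type*} [CommSemiring R] [AddCommMonoid M] [Module R M]

structure IsZeroHeckeAction (T : ℕ → M →ₗ[R] M) (n : ℕ) : Prop where
  idem : ∀ i, 1 ≤ i → i + 1 ≤ n → (T i).comp (T i) = T i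
  braid : ∀ i, 1 ≤ i → i + 2 ≤ n →
    (T i).comp ((T (i + 1)).comp (T i)) = (T (i + 1)).comp ((T i).comp (T (i + 1)))
  comm : ∀ i j, 1 ≤ i → i + 1 < j → j + 1 ≤ n → (T i).comp (T j) = (T j).comp (T i)

/-- `g = 0` exempts no generator. -/
def IsEigenvectorExcept (T : ℕ → M →ₗ[R] M) (n g : ℕ) (x : M) : Prop :=
  ∀ i, 1 ≤ i → i + 1 ≤ n → i ≠ g → T i x ∈ R ∙ x

variable {T : ℕ → M →ₗ[R] M} {n : ℕ}

theorem Commute.apply_mem_span_singleton_apply {f g : Module.End R M} {x : M}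
    (hfg : Commute f g) (hf : f x ∈ R ∙ x) : f (g x) ∈ R ∙ g x := by
  obtain ⟨a, ha⟩ := Submodule.mem_span_singleton.1 hf
  refine Submodule.mem_span_singleton.2 ⟨a, ?_⟩
  rw [← map_smul, ha, ← Module.End.mul_apply, ← hfg.eq, Module.End.mul_apply]

namespace IsZeroHeckeAction

theorem mono (hT : IsZeroHeckeAction T n) {m : ℕ} (hmn : m ≤ n) : IsZeroHeckeAction T m where
  idem i h1 h2 := hT.idem i h1 (by omega)
  braid i h1 h2 := hT.braid i h1 (by omega)
  comm i j h1 h2 h3 := hT.comm i j h1 h2 (by omega)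

theorem idem_apply (hT : IsZeroHeckeAction T n) {i : ℕ} (h1 : 1 ≤ i) (h2 : i + 1 ≤ n)
    (x : M) : T i (T i x) = T i x :=
  LinearMap.congr_fun (hT.idem i h1 h2) x

theorem braid_apply (hT : IsZeroHeckeAction T n) {i : ℕ} (h1 : 1 ≤ i) (h2 : i + 2 ≤ n)
    (x : M) : T i (T (i + 1) (T i x)) = T (i + 1) (T i (T (i + 1) x)) :=
  LinearMap.congr_fun (hT.braid i h1 h2) x

/-- Unless `T (g + 1)` kills `x`, replacing `x` by `T (g + 1) x` moves the exceptional generator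
down to `g`; `hnext` is the braid-relation input that makes `T (g + 2)` preserve the new line. -/
theorem exists_eigenvector_of_isEigenvectorExcept (hT : IsZeroHeckeAction T n) (g : ℕ) (x : M)
    (hg : g + 1 ≤ n) (hx : x ≠ 0) (hxg : IsEigenvectorExcept T n g x)
    (hnext : 1 ≤ g → g + 2 ≤ n → T (g + 1) (T g x) ∈ R ∙ T g x) :
    ∃ u ≠ 0, IsEigenvectorExcept T n 0 u := by
  induction g generalizing x with
  | zero => exact ⟨x, hx, hxg⟩
  | succ g ih =>
    by_cases hzero : T (g + 1) x = 0
    · refine ⟨x, hx, fun i h1 h2 _ => ?_⟩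
      rcases eq_or_ne i (g + 1) with rfl | hi
      · simp [hzero]
      · exact hxg i h1 h2 hi
    refine ih _ (by omega) hzero (fun i h1 h2 hig => ?_) (fun h1 h2 => ?_)
    · rcases lt_trichotomy i (g + 1) with hlt | rfl | hgt
      · exact Commute.apply_mem_span_singleton_apply (hT.comm i (g + 1) h1 (by omega) (by omega))
          (hxg i h1 h2 (by omega))
      · rw [hT.idem_apply h1 h2]
        exact Submodule.mem_span_singleton_self _
      · rcases eq_or_ne i (g + 2) with rfl | hi
        · exact hnext (by omega) h2
        · exact Commute.apply_mem_span_singleton_apply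
            (hT.comm (g + 1) i (by omega) (by omega) h2).symm (hxg i h1 h2 (by omega))
    · obtain ⟨a, ha⟩ := Submodule.mem_span_singleton.1 (hxg g h1 (by omega) (by omega))
      rw [← hT.braid_apply h1 h2, ← ha, map_smul, map_smul]
      exact Submodule.smul_mem _ _ (Submodule.mem_span_singleton_self _)

theorem exists_eigenvector [Nontrivial M] (hT : IsZeroHeckeAction T n) :
    ∃ u ≠ 0, IsEigenvectorExcept T n 0 u := by
  induction n with
  | zero =>
    obtain ⟨x, hx⟩ := exists_ne (0 : M)
    exact ⟨x, hx, fun i _ h2 => by omega⟩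
  | succ n ih =>
    obtain ⟨u, hu, hun⟩ := ih (hT.mono n.le_succ)
    exact hT.exists_eigenvector_of_isEigenvectorExcept n u le_rfl hu
      (fun i h1 h2 hin => hun i h1 (by omega) (by omega)) (fun _ h => by omega)

end IsZeroHeckeAction

end ZeroHecke

section SimpleAction

open Module

variable {V : Type*} [AddCommGroup V] [Module k V]

def IsSimpleAction (T : ℕ → V →ₗ[k] V) (n : ℕ) : Prop :=
  Nontrivial V ∧
    ∀ U : Submodule k V,
      (∀ i, 1 ≤ i → i + 1 ≤ n → ∀ x ∈ U, T i x ∈ U) → U = ⊥ ∨ U = ⊤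

variable {T : ℕ → V →ₗ[k] V} {n : ℕ}

theorem isSimpleAction_of_finrank_eq_one (h : finrank k V = 1) : IsSimpleAction T n := by
  have := is_simple_module_of_finrank_eq_one (A := k) h
  exact ⟨nontrivial_of_finrank_eq_succ h, fun U _ => eq_bot_or_eq_top U⟩

theorem IsIdempotentElem.eq_zero_or_eq_one_of_finrank_eq_one {f : Module.End k V}
    (h : finrank k V = 1) (hf : IsIdempotentElem f) : f = 0 ∨ f = 1 := by
  have := nontrivial_of_finrank_eq_succ h
  obtain ⟨c, rfl⟩ := (f.existsUnique_eq_smul_id_of_finrank_eq_one h).exists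
  obtain ⟨v, hv⟩ := exists_ne (0 : V)
  have hc : IsIdempotentElem c :=
    smul_left_injective k hv (by simpa [mul_smul] using LinearMap.congr_fun hf v)
  rcases IsIdempotentElem.iff_eq_zero_or_one.1 hc with rfl | rfl
  · simp
  · simp [End.one_eq_id]

namespace IsZeroHeckeAction

theorem finrank_eq_one (hT : IsZeroHeckeAction T n) (hs : IsSimpleAction T n) :
    finrank k V = 1 := by
  have := hs.1
  obtain ⟨u, hu, hinv⟩ := hT.exists_eigenvector
  have hstable : ∀ i, 1 ≤ i → i + 1 ≤ n → ∀ x ∈ k ∙ u, T i x ∈ k ∙ u := by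
    intro i h1 h2 x hx
    obtain ⟨a, rfl⟩ := Submodule.mem_span_singleton.1 hx
    rw [map_smul]
    exact Submodule.smul_mem _ _ (hinv i h1 h2 (by omega))
  rcases hs.2 _ hstable with h | h
  · exact absurd (Submodule.span_singleton_eq_bot.1 h) hu
  · rw [← finrank_top, ← h, finrank_span_singleton hu]

theorem exists_composition_apply_eq_smul (hT : IsZeroHeckeAction T n) (h : finrank k V = 1) :
    ∃ α : Composition n, ∀ i, 1 ≤ i → i + 1 ≤ n → ∀ v : V,
      T i v = (if i ∈ compDescents α then (0 : k) else 1) • v := by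
  classical
  have := nontrivial_of_finrank_eq_succ h
  obtain ⟨α, hα⟩ :=
    exists_composition_compDescents_eq (n := n) ((Finset.Ico 1 n).filter (T · = 0))
    (fun i hi => by simp only [Finset.mem_filter, Finset.mem_Ico] at hi; omega)
  refine ⟨α, fun i h1 h2 v => ?_⟩
  have hidem : IsIdempotentElem (T i) := hT.idem i h1 h2
  rcases hidem.eq_zero_or_eq_one_of_finrank_eq_one h with h0 | h1'
  · simp [hα, h0, h1, show i < n by omega]
  · simp [hα, h1']

end IsZeroHeckeAction

end SimpleAction

namespace HSeq

variable {X : HSeq k}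

def IsSimple (X : HSeq k) : Prop :=
  (∃ m, ∃ v : X.V m, v ≠ 0) ∧
    ∀ W : ∀ m, Submodule k (X.V m), X.IsSub W → (∀ m, W m = ⊥) ∨ (∀ m, W m = ⊤)

def IsConcentratedIn (X : HSeq k) (n : ℕ) : Prop :=
  ∀ m, m ≠ n → ∀ v : X.V m, v = 0

theorem IsHModule.isZeroHeckeAction (hX : X.IsHModule) (n : ℕ) : IsZeroHeckeAction (X.T n) n :=
  ⟨hX.1 n, hX.2.1 n, hX.2.2.1 n⟩

theorem isSub_truncation (X : HSeq k) (p : ℕ) :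
    X.IsSub fun m => if p ≤ m then ⊤ else ⊥ := by
  refine ⟨fun m i _ _ x hx => ?_, fun m x hx => ?_⟩ <;> beta_reduce at hx ⊢ <;>
    by_cases hp : p ≤ m
  · simp [hp]
  · rw [if_neg hp, Submodule.mem_bot] at hx
    simp [hx]
  · simp [show p ≤ m + 1 by omega]
  · rw [if_neg hp, Submodule.mem_bot] at hx
    simp [hx]

theorem IsSimple.exists_isConcentratedIn (h : X.IsSimple) : ∃ n, X.IsConcentratedIn n := by
  obtain ⟨⟨n, v, hv⟩, hW⟩ := h
  have vanish (p : ℕ) :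
      (∀ m, p ≤ m → ∀ x : X.V m, x = 0) ∨ (∀ m, m < p → ∀ x : X.V m, x = 0) := by
    rcases hW _ (X.isSub_truncation p) with h | h
    · refine Or.inl fun m hm x => ?_
      have htop : (⊤ : Submodule k (X.V m)) = ⊥ := by simpa [hm] using h m
      exact (Submodule.mem_bot k).1 (htop ▸ Submodule.mem_top)
    · refine Or.inr fun m hm x => ?_
      have hbot : (⊥ : Submodule k (X.V m)) = ⊤ := by simpa [show ¬p ≤ m by omega] using h m
      exact (Submodule.mem_bot k).1 (hbot ▸ Submodule.mem_top)
  refine ⟨n, fun m hm x => ?_⟩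
  rcases vanish n with h | below
  · exact absurd (h n le_rfl v) hv
  rcases vanish (n + 1) with above | h
  · rcases Nat.lt_or_gt_of_ne hm with hlt | hgt
    · exact below m hlt x
    · exact above m hgt x
  · exact absurd (h n n.lt_succ_self v) hv

namespace IsConcentratedIn

variable {n : ℕ}

theorem subsingleton (hn : X.IsConcentratedIn n) {m : ℕ} (hm : m ≠ n) : Subsingleton (X.V m) :=
  ⟨fun a b => (hn m hm a).trans (hn m hm b).symm⟩

theorem isSub_iff (hn : X.IsConcentratedIn n) (W : ∀ m, Submodule k (X.V m)) :
    X.IsSub W ↔ ∀ i, 1 ≤ i → i + 1 ≤ n → ∀ x ∈ W n, X.T n i x ∈ W n := by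
  refine ⟨fun hW => hW.1 n, fun hWn => ⟨fun m i h1 h2 x hx => ?_, fun m x _ => ?_⟩⟩
  · rcases eq_or_ne m n with rfl | hm
    · exact hWn i h1 h2 x hx
    · rw [hn m hm (X.T m i x)]
      exact Submodule.zero_mem _
  · rcases eq_or_ne m n with rfl | hm
    · rw [hn (m + 1) (by omega) (X.φ m x)]
      exact Submodule.zero_mem _
    · rw [hn m hm x, map_zero]
      exact Submodule.zero_mem _

theorem isSimple_iff (hn : X.IsConcentratedIn n) : X.IsSimple ↔ IsSimpleAction (X.T n) n := by
  classical
  have trivial_off (m : ℕ) (hm : m ≠ n) (U : Submodule k (X.V m)) : U = ⊥ ∧ U = ⊤ :=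
    have := hn.subsingleton hm
    ⟨Subsingleton.elim _ _, Subsingleton.elim _ _⟩
  constructor
  · rintro ⟨⟨m, v, hv⟩, hW⟩
    have hmn : m = n := by_contra fun hm => hv (hn m hm v)
    subst hmn
    refine ⟨⟨v, 0, hv⟩, fun U hU => ?_⟩
    let W : ∀ j, Submodule k (X.V j) := Function.update (fun _ => ⊥) m U
    have hWm : W m = U := Function.update_self ..
    rcases hW W ((hn.isSub_iff W).2 (hWm ▸ hU)) with h | h
    · exact Or.inl (hWm ▸ h m)
    · exact Or.inr (hWm ▸ h m)
  · rintro ⟨hnt, hU⟩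
    obtain ⟨v, hv⟩ := exists_ne (0 : X.V n)
    refine ⟨⟨n, v, hv⟩, fun W hW => ?_⟩
    rcases hU (W n) ((hn.isSub_iff W).1 hW) with h | h
    · exact Or.inl fun m => if hm : m = n then hm ▸ h else (trivial_off m hm _).1
    · exact Or.inr fun m => if hm : m = n then hm ▸ h else (trivial_off m hm _).2

end IsConcentratedIn

end HSeq

/-- The simple objects in the category of `ℋ`-modules are exactly the modules equal
to the one-dimensional simple `H_{|α|}(0)`-module `C_α` in degree `|α|` and zero in
all other degrees. -/
theorem hmodule_simple_iff (X : HSeq k) (hX : X.IsHModule) :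
    ((∃ m, ∃ v : X.V m, v ≠ 0) ∧
      ∀ W : ∀ m, Submodule k (X.V m), X.IsSub W →
        (∀ m, W m = ⊥) ∨ (∀ m, W m = ⊤)) ↔
    ∃ (n : ℕ) (α : Composition n),
      (∀ m, m ≠ n → ∀ v : X.V m, v = 0) ∧
      Module.finrank k (X.V n) = 1 ∧
      ∀ i, 1 ≤ i → i + 1 ≤ n → ∀ v : X.V n,
        X.T n i v = (if i ∈ compDescents α then (0 : k) else 1) • v := by
  change X.IsSimple ↔ ∃ (n : ℕ) (α : Composition n), X.IsConcentratedIn n ∧ _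
  constructor
  · intro hsimple
    obtain ⟨n, hn⟩ := hsimple.exists_isConcentratedIn
    have hrank := (hX.isZeroHeckeAction n).finrank_eq_one (hn.isSimple_iff.1 hsimple)
    obtain ⟨α, hα⟩ := (hX.isZeroHeckeAction n).exists_composition_apply_eq_smul hrank
    exact ⟨n, α, hn, hrank, hα⟩
  · rintro ⟨n, -, hn, hrank, -⟩
    exact hn.isSimple_iff.2 (isSimpleAction_of_finrank_eq_one hrank)
end

section
/- For the 0-Hecke action on standard reverse composition tableaux given by π̄_i(τ) = −τ if i ∉ Des(τ), π̄_i(τ) = 0 if i ∈ Des(τ) with i and i+1 attacking, and π̄_i(τ) = s_i(τ) if i ∈ Des(τ) with i and i+1 non-attacking, one has π̄_i² = −π̄_i for all 1 ≤ i ≤ n−1. -/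
open scoped Classical

/-- A cell `(i, j)` of the reverse composition diagram of `α`: row `i` (from the top),
column `j`, both 0-based, with `j < α_i`. -/
def RCCell {n : ℕ} (α : Composition n) : Type :=
  {p : ℕ × ℕ // p.1 < α.length ∧ p.2 < α.blocks.getD p.1 0}

/-- A bijective filling of the reverse composition diagram of `α` by `{1,…,n}`
(entries encoded 0-based as `Fin n`). -/
abbrev RCFilling {n : ℕ} (α : Composition n) : Type := RCCell α ≃ Fin n

/-- The row of the entry `v` in the filling `τ`. -/
def rcRow {n : ℕ} {α : Composition n} (τ : RCFilling α) (v : Fin n) : ℕ :=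
  (τ.symm v).1.1

/-- The column of the entry `v` in the filling `τ`. -/
def rcCol {n : ℕ} {α : Composition n} (τ : RCFilling α) (v : Fin n) : ℕ :=
  (τ.symm v).1.2

/-- `τ` is a standard reverse composition tableau: rows decrease from left to right,
the first column increases from top to bottom, and the triple rule holds. -/
def IsSRCT {n : ℕ} {α : Composition n} (τ : RCFilling α) : Prop :=
  (∀ c c' : RCCell α, c.1.1 = c'.1.1 → c'.1.2 = c.1.2 + 1 → τ c' < τ c) ∧
  (∀ c c' : RCCell α, c.1.2 = 0 → c'.1.2 = 0 → c.1.1 < c'.1.1 → τ c < τ c') ∧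
  (∀ c1 c2 : RCCell α, c1.1.1 < c2.1.1 → c2.1.2 = c1.1.2 + 1 → τ c2 < τ c1 →
    ∃ c3 : RCCell α, c3.1.1 = c1.1.1 ∧ c3.1.2 = c1.1.2 + 1 ∧ τ c2 < τ c3)

/-- `v`-th entry descent: the entry `w = v + 1` appears weakly right of `v`. -/
def rcDes {n : ℕ} {α : Composition n} (τ : RCFilling α) (v w : Fin n) : Prop :=
  rcCol τ v ≤ rcCol τ w

/-- `v` and `w = v + 1` are attacking: same column, or adjacent columns with `w`
strictly down and to the right of `v`. -/
def rcAttack {n : ℕ} {α : Composition n} (τ : RCFilling α) (v w : Fin n) : Prop :=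
  rcCol τ w = rcCol τ v ∨ (rcCol τ w = rcCol τ v + 1 ∧ rcRow τ v < rcRow τ w)

/-- The operator `π̄_i` on basis elements: `π̄_i(τ) = -τ` if `i ∉ Des(τ)`, `0` if
`i ∈ Des(τ)` with `i, i+1` attacking, and `s_i(τ)` (entries `i` and `i+1` swapped)
otherwise. -/
noncomputable def piBarFun {n : ℕ} (α : Composition n) (F : Type) [Field F]
    (v w : Fin n) (τ : RCFilling α) : RCFilling α →₀ F :=
  if rcDes τ v w then
    (if rcAttack τ v w then 0 else Finsupp.single (τ.trans (Equiv.swap v w)) 1)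
  else -Finsupp.single τ 1

/-- The linear extension of `π̄_i` to the span of the fillings. -/
noncomputable def piBar {n : ℕ} (α : Composition n) (F : Type) [Field F]
    (v w : Fin n) : (RCFilling α →₀ F) →ₗ[F] (RCFilling α →₀ F) :=
  Finsupp.lift _ F _ (piBarFun α F v w)

/-- For the 0-Hecke action on standard reverse composition tableaux one has
`π̄_i² = -π̄_i` (here `v, w = v + 1 : Fin n` encode the consecutive entries `i, i+1`,
`1 ≤ i ≤ n-1`). -/
theorem srct_piBar_sq (n : ℕ) (F : Type) [Field F] (α : Composition n)
    (v w : Fin n) (hw : (w : ℕ) = (v : ℕ) + 1)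
    (τ : RCFilling α) (hτ : IsSRCT τ) :
    piBar α F v w (piBar α F v w (Finsupp.single τ 1)) =
      -piBar α F v w (Finsupp.single τ 1) := by
  classical
  have key : ∀ τ' : RCFilling α, piBar α F v w (Finsupp.single τ' 1) = piBarFun α F v w τ' := by
    intro τ'
    simp [piBar, Finsupp.lift_apply, Finsupp.sum_single_index]
  rw [key]
  by_cases hd : rcDes τ v w
  · by_cases ha : rcAttack τ v w
    · simp [piBarFun, hd, ha]
    · have hfun : piBarFun α F v w τ = Finsupp.single (τ.trans (Equiv.swap v w)) 1 := by
        simp [piBarFun, hd, ha]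
      rw [hfun, key]
      set σ := τ.trans (Equiv.swap v w) with hσ
      have hσv : rcCol σ v = rcCol τ w := by
        simp [rcCol, hσ, Equiv.symm_trans_apply]
      have hσw : rcCol σ w = rcCol τ v := by
        simp [rcCol, hσ, Equiv.symm_trans_apply]
      have hnd : ¬ rcDes σ v w := by
        intro h
        apply ha
        left
        unfold rcDes at h hd
        omega
      simp [piBarFun, hnd]
  · have hfun : piBarFun α F v w τ = -Finsupp.single τ 1 := by
      simp [piBarFun, hd]
    rw [hfun, map_neg, key, hfun, neg_neg]
end
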